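/- Let D ⊂ ℝ^d be a measurable set, 1 ≤ p < ∞, and g ∈ L¹(D^k, C₀(ℝ^{Nk})). Then the functional L_g : L^p(D,ℝ^N) → ℝ defined by L_g(u) = ∫_{D^k} g(x₁,…,x_k)(u(x₁),…,u(x_k)) dx is uniformly continuous and satisfies sup_u |L_g(u)| ≤ ‖g‖_{L¹(D^k,C₀)}. -/

import Mathlib

/-!
Every term is dominated by `‖g x‖`, which gives the bound. For uniform continuity it suffices,
by the sequential criterion and a subsequence argument, to take pairs `uₙ, vₙ` with
`uₙ - vₙ → 0` almost everywhere (an `Lᵖ`-null sequence has an a.e. null subsequence). Null sets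
of `μ` pull back to null sets of `μ^ι` under each coordinate, and `g x` is uniformly continuous,
so the integrands `g x (uₙ(xᵢ))ᵢ - g x (vₙ(xᵢ))ᵢ` tend to `0` a.e. under the bound `2‖g x‖`;
dominated convergence concludes.
-/

open MeasureTheory Filter Topology
open scoped ZeroAtInfty Uniformity

namespace ZeroAtInftyContinuousMap

variable {α β : Type*} [TopologicalSpace α] [NormedAddCommGroup β]

theorem norm_apply_le (f : C₀(α, β)) (x : α) : ‖f x‖ ≤ ‖f‖ := by
  rw [← norm_toBCF_eq_norm]
  exact f.toBCF.norm_coe_le_norm x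

instance : ContinuousEval C₀(α, β) α β where
  continuous_eval := (continuous_eval (F := BoundedContinuousFunction α β)).comp
    ((isometry_toBCF.continuous.comp continuous_fst).prodMk continuous_snd)

end ZeroAtInftyContinuousMap

theorem UniformContinuous.tendsto_sub_of_tendsto_sub {α β γ : Type*}
    [SeminormedAddCommGroup α] [SeminormedAddCommGroup β] {f : α → β}
    (hf : UniformContinuous f) {l : Filter γ} {a b : γ → α}
    (h : Tendsto (fun n => a n - b n) l (𝓝 0)) :
    Tendsto (fun n => f (a n) - f (b n)) l (𝓝 0) := by
  have hab : Tendsto (fun n => (a n, b n)) l (𝓤 α) := by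
    rw [tendsto_uniformity_iff_dist_tendsto_zero]
    simpa [dist_eq_norm] using h.norm
  have := tendsto_uniformity_iff_dist_tendsto_zero.1 (Tendsto.comp hf hab)
  simpa [dist_eq_norm, tendsto_zero_iff_norm_tendsto_zero] using this

section

variable {X E F ι : Type*} [MeasurableSpace X] {μ : Measure X} [SigmaFinite μ] [Fintype ι]

theorem ae_forall_apply_of_ae {P : X → Prop} (h : ∀ᵐ y ∂μ, P y) :
    ∀ᵐ x ∂(Measure.pi fun _ : ι => μ), ∀ i, P (x i) :=
  eventually_all.2 fun _ => Measure.tendsto_eval_ae_ae.eventually h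

variable [NormedAddCommGroup E] [MeasurableSpace E] [BorelSpace E] [SecondCountableTopology E]

theorem aestronglyMeasurable_comp_eval {u : X → E} (hu : AEMeasurable u μ) :
    AEStronglyMeasurable (fun x : ι → X => fun i => u (x i)) (Measure.pi fun _ => μ) :=
  (aemeasurable_pi_lambda _ fun i =>
    hu.comp_quasiMeasurePreserving (Measure.quasiMeasurePreserving_eval _ i)).aestronglyMeasurable

variable [NormedAddCommGroup F] {g : (ι → X) → C₀(ι → E, F)}

theorem integrable_apply_comp_eval (hg : Integrable g (Measure.pi fun _ => μ))
    {u : X → E} (hu : AEMeasurable u μ) :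
    Integrable (fun x => g x (fun i => u (x i))) (Measure.pi fun _ => μ) :=
  hg.norm.mono' (continuous_eval.comp_aestronglyMeasurable
      (hg.1.prodMk (aestronglyMeasurable_comp_eval hu)))
    (.of_forall fun x => (g x).norm_apply_le _)

variable [NormedSpace ℝ F]

theorem norm_integral_apply_comp_eval_le (hg : Integrable g (Measure.pi fun _ => μ))
    {u : X → E} (hu : AEMeasurable u μ) :
    ‖∫ x, g x (fun i => u (x i)) ∂(Measure.pi fun _ => μ)‖
      ≤ ∫ x, ‖g x‖ ∂(Measure.pi fun _ => μ) :=
  (norm_integral_le_integral_norm _).trans <|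
    integral_mono (integrable_apply_comp_eval hg hu).norm hg.norm
      fun x => (g x).norm_apply_le _

theorem tendsto_integral_apply_comp_eval_sub (hg : Integrable g (Measure.pi fun _ => μ))
    {u v : ℕ → X → E} (hu : ∀ n, AEMeasurable (u n) μ) (hv : ∀ n, AEMeasurable (v n) μ)
    (huv : ∀ᵐ y ∂μ, Tendsto (fun n => u n y - v n y) atTop (𝓝 0)) :
    Tendsto (fun n => (∫ x, g x (fun i => u n (x i)) ∂(Measure.pi fun _ => μ)) -
      ∫ x, g x (fun i => v n (x i)) ∂(Measure.pi fun _ => μ)) atTop (𝓝 0) := by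
  simp_rw [← integral_sub (integrable_apply_comp_eval hg (hu _))
    (integrable_apply_comp_eval hg (hv _))]
  rw [← integral_zero (ι → X) F]
  refine tendsto_integral_of_dominated_convergence (fun x => 2 * ‖g x‖)
    (fun n => ((integrable_apply_comp_eval hg (hu n)).sub
      (integrable_apply_comp_eval hg (hv n))).1)
    (hg.norm.const_mul 2) (fun n => .of_forall fun x => ?_) ?_
  · calc ‖g x (fun i => u n (x i)) - g x (fun i => v n (x i))‖
        ≤ ‖g x‖ + ‖g x‖ := norm_sub_le_of_le ((g x).norm_apply_le _) ((g x).norm_apply_le _)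
      _ = 2 * ‖g x‖ := (two_mul _).symm
  · filter_upwards [ae_forall_apply_of_ae (ι := ι) huv] with x hx
    exact (ZeroAtInftyContinuousMap.uniformContinuous (g x)).tendsto_sub_of_tendsto_sub
      (tendsto_pi_nhds.2 hx)

theorem uniformContinuous_integral_apply_comp_eval {p : ENNReal} [Fact (1 ≤ p)]
    (hg : Integrable g (Measure.pi fun _ => μ)) :
    UniformContinuous fun u : Lp E p μ =>
      ∫ x, g x (fun i => u (x i)) ∂(Measure.pi fun _ => μ) := by
  rw [UniformContinuous, tendsto_iff_seq_tendsto]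
  intro w hw
  rw [tendsto_uniformity_iff_dist_tendsto_zero] at hw ⊢
  simp only [Function.comp_apply, dist_eq_norm, ← tendsto_zero_iff_norm_tendsto_zero] at hw ⊢
  refine tendsto_of_subseq_tendsto fun ns hns => ?_
  obtain ⟨ms, -, hms⟩ := (tendstoInMeasure_of_tendsto_Lp (hw.comp hns)).exists_seq_tendsto_ae
  refine ⟨ms, tendsto_integral_apply_comp_eval_sub hg
    (fun _ => (Lp.aestronglyMeasurable _).aemeasurable)
    (fun _ => (Lp.aestronglyMeasurable _).aemeasurable) ?_⟩
  filter_upwards [hms, ae_all_iff.2 fun n => Lp.coeFn_sub (w (ns (ms n))).1 (w (ns (ms n))).2,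
    Lp.coeFn_zero E p μ] with y hy hsub hzero
  rw [hzero, Pi.zero_apply] at hy
  convert hy using 2 with n
  exact (hsub n).symm

end

theorem stmt7_general (d N k : ℕ) (D : Set (Fin d → ℝ))
    (p : ENNReal) [Fact (1 ≤ p)]
    (g : (Fin k → (Fin d → ℝ)) → ZeroAtInftyContinuousMap (Fin k → (Fin N → ℝ)) ℝ)
    (hg : Integrable g (Measure.pi fun _ : Fin k => volume.restrict D)) :
    UniformContinuous (fun u : Lp (Fin N → ℝ) p (volume.restrict D) =>
      ∫ x, g x (fun i => u (x i)) ∂(Measure.pi fun _ : Fin k => volume.restrict D)) ∧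
    ∀ u : Lp (Fin N → ℝ) p (volume.restrict D),
      |∫ x, g x (fun i => u (x i)) ∂(Measure.pi fun _ : Fin k => volume.restrict D)|
        ≤ ∫ x, ‖g x‖ ∂(Measure.pi fun _ : Fin k => volume.restrict D) :=
  ⟨uniformContinuous_integral_apply_comp_eval hg, fun u =>
    norm_integral_apply_comp_eval_le hg (Lp.aestronglyMeasurable u).aemeasurable⟩

theorem stmt7 (d N k : ℕ) (D : Set (Fin d → ℝ)) (hD : MeasurableSet D)
    (p : ENNReal) (hp1 : 1 ≤ p) [Fact (1 ≤ p)] (hp : p ≠ ⊤)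
    (g : (Fin k → (Fin d → ℝ)) → ZeroAtInftyContinuousMap (Fin k → (Fin N → ℝ)) ℝ)
    (hg : Integrable g (Measure.pi fun _ : Fin k => volume.restrict D)) :
    UniformContinuous (fun u : Lp (Fin N → ℝ) p (volume.restrict D) =>
      ∫ x, g x (fun i => u (x i)) ∂(Measure.pi fun _ : Fin k => volume.restrict D)) ∧
    ∀ u : Lp (Fin N → ℝ) p (volume.restrict D),
      |∫ x, g x (fun i => u (x i)) ∂(Measure.pi fun _ : Fin k => volume.restrict D)|
        ≤ ∫ x, ‖g x‖ ∂(Measure.pi fun _ : Fin k => volume.restrict D) :=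
  stmt7_general d N k D p g hg
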